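/- For $k \ge 3$, $0 \le s \le k-4$, and $3 \le k \le n$, define $P(s) = \frac{(s+1)(n-s-1)!}{(k-s-1)!(n-k)!} + \frac{(n+1)(s+1)(n-s-2)!}{(k-s-2)!(n-k)!} - \frac{(n-s-2)!}{(k-s-3)!(n-k)!}$ and $Q(s) = \frac{(n-1)(s+2)(n-s-3)!}{(k-s-3)!(n-k)!}$. Then $2P(s+1) - Q(s) \ge 0$. -/

import Mathlib

/-- `zfact m` is `m!` for `m ≥ 0` and `0` for `m < 0`. -/
noncomputable def zfact (m : ℤ) : ℝ := if 0 ≤ m then (Nat.factorial m.toNat : ℝ) else 0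

/-- `zfactInv m` is `1/m!` for `m ≥ 0` and `0` for `m < 0`
(the convention `1/m! = 0` for negative `m`). -/
noncomputable def zfactInv (m : ℤ) : ℝ := if 0 ≤ m then ((Nat.factorial m.toNat : ℝ))⁻¹ else 0

/-- `P(s) = (s+1)(n-s-1)!/((k-s-1)!(n-k)!) + (n+1)(s+1)(n-s-2)!/((k-s-2)!(n-k)!)
          - (n-s-2)!/((k-s-3)!(n-k)!)`. -/
noncomputable def Pcoef (n k s : ℤ) : ℝ :=
  ((s : ℝ) + 1) * zfact (n - s - 1) * zfactInv (k - s - 1) * zfactInv (n - k)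
  + ((n : ℝ) + 1) * ((s : ℝ) + 1) * zfact (n - s - 2) * zfactInv (k - s - 2) * zfactInv (n - k)
  - zfact (n - s - 2) * zfactInv (k - s - 3) * zfactInv (n - k)

/-- `Q(s) = (n-1)(s+2)(n-s-3)!/((k-s-3)!(n-k)!)`. -/
noncomputable def Qcoef (n k s : ℤ) : ℝ :=
  ((n : ℝ) - 1) * ((s : ℝ) + 2) * zfact (n - s - 3) * zfactInv (k - s - 3) * zfactInv (n - k)

open Nat

/-!
Put `M = n - k` and `T = k - s - 4`, both nonnegative. Then every factorial occurring in
`2 P(s+1) - Q(s)` has a nonnegative argument, and the expression factors as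
`(M+T+1)! / (M! (T+2)!)` times a polynomial in `M`, `T`, `s` with nonnegative coefficients.
-/

lemma zfact_of_eq {m : ℤ} {a : ℕ} (h : m = a) : zfact m = a ! := by
  simp [zfact, h]

lemma zfactInv_of_eq {m : ℤ} {a : ℕ} (h : m = a) : zfactInv m = (a ! : ℝ)⁻¹ := by
  simp [zfactInv, h]

lemma two_mul_Pcoef_succ_sub_Qcoef {n k : ℤ} {M T S : ℕ}
    (hM : n - k = M) (hT : k - S - 4 = T) :
    2 * Pcoef n k (S + 1) - Qcoef n k S =
      (2 * (S + 2) * (M + T + 2) + (T + 2) * (S * (M + T + S + 7) + 2 * (M + S + 6)))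
        * ((M + T + 1) ! / (M ! * (T + 2) !)) := by
  have hn : (n : ℝ) = M + T + S + 4 := by exact_mod_cast (show n = M + T + S + 4 by omega)
  rw [Pcoef, Qcoef,
    zfact_of_eq (m := n - (S + 1) - 1) (a := M + T + 2) (by omega),
    zfact_of_eq (m := n - (S + 1) - 2) (a := M + T + 1) (by omega),
    zfact_of_eq (m := n - S - 3) (a := M + T + 1) (by omega),
    zfactInv_of_eq (m := k - (S + 1) - 1) (a := T + 2) (by omega),
    zfactInv_of_eq (m := k - (S + 1) - 2) (a := T + 1) (by omega),
    zfactInv_of_eq (m := k - (S + 1) - 3) (a := T) (by omega),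
    zfactInv_of_eq (m := k - S - 3) (a := T + 1) (by omega),
    zfactInv_of_eq hM, hn]
  push_cast [Nat.factorial_succ]
  field_simp
  ring

theorem stmt15_general (n k s : ℤ) (hkn : k ≤ n) (hs0 : 0 ≤ s) (hs : s ≤ k - 4) :
    0 ≤ 2 * Pcoef n k (s + 1) - Qcoef n k s := by
  lift n - k to ℕ using sub_nonneg.mpr hkn with M hM
  lift k - s - 4 to ℕ using by omega with T hT
  lift s to ℕ using hs0 with S
  rw [two_mul_Pcoef_succ_sub_Qcoef hM.symm hT.symm]
  positivity

theorem stmt15 (n k s : ℤ) (hk : 3 ≤ k) (hkn : k ≤ n) (hs0 : 0 ≤ s) (hs : s ≤ k - 4) :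
    0 ≤ 2 * Pcoef n k (s + 1) - Qcoef n k s :=
  stmt15_general n k s hkn hs0 hs
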